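/- arXiv:2407.07655 — 4 statements merged into one kernel-verified Lean document; each statement's English description precedes it below -/
import Mathlib

section
/- Let n ≥ 2 and let Θ, Θ̃ : ZMod n → ℝ be real signals such that F(Θ)_k ≠ 0 for every k ∈ ZMod n. If β(Θ̃)_{0,0} = β(Θ)_{0,0}, β(Θ̃)_{0,1} = β(Θ)_{0,1}, and β(Θ̃)_{1,k} = β(Θ)_{1,k} for every k ∈ ZMod n that is the image of an integer between 1 and n−2, then there exists h ∈ ZMod n such that Θ̃(g) = Θ(g + h) for all g ∈ ZMod n. (Inversion of the selective bispectrum on cyclic groups: n of the n² bispectral coefficients determine a real signal up to cyclic translation.) -/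
open Finset

/-- The discrete Fourier transform of a signal `Θ : ZMod n → ℂ`:
`F(Θ)_k = Σ_{g} Θ(g) · exp(−2πi·k̄·ḡ/n)`. -/
noncomputable def cyclicDFT (n : ℕ) [NeZero n] (Θ : ZMod n → ℂ) (k : ZMod n) : ℂ :=
  ∑ g : ZMod n,
    Θ g * Complex.exp (-(2 * (Real.pi : ℂ) * Complex.I * (k.val * g.val)) / n)

/-- The bispectrum of a signal `Θ : ZMod n → ℂ`:
`β(Θ)_{j,k} = F(Θ)_j · F(Θ)_k · conj(F(Θ)_{j+k})`. -/
noncomputable def cyclicBispectrum (n : ℕ) [NeZero n] (Θ : ZMod n → ℂ) (j k : ZMod n) : ℂ :=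
  cyclicDFT n Θ j * cyclicDFT n Θ k * (starRingEnd ℂ) (cyclicDFT n Θ (j + k))

lemma cyclicDFT_eq_dft (n : ℕ) [NeZero n] (Θ : ZMod n → ℂ) (k : ZMod n) :
    cyclicDFT n Θ k = ZMod.dft Θ k := by
  rw [ZMod.dft_apply, cyclicDFT]
  refine Finset.sum_congr rfl fun g _ => ?_
  rw [smul_eq_mul, mul_comm]
  have h1 : (-(g * k) : ZMod n) = (((-(k.val * g.val : ℕ) : ℤ)) : ZMod n) := by
    push_cast [ZMod.natCast_zmod_val]
    ring
  rw [h1, ZMod.stdAddChar_coe]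
  congr 1
  push_cast
  ring

lemma conj_stdAddChar (n : ℕ) [NeZero n] (x : ZMod n) :
    (starRingEnd ℂ) (ZMod.stdAddChar x) = ZMod.stdAddChar (-x) := by
  have h1 : x = (((x.val : ℕ) : ℤ) : ZMod n) := by
    rw [Int.cast_natCast, ZMod.natCast_zmod_val]
  rw [h1, ← Int.cast_neg, ZMod.stdAddChar_coe, ZMod.stdAddChar_coe, ← Complex.exp_conj]
  congr 1
  simp only [map_div₀, map_mul, Complex.conj_I, Complex.conj_ofReal, map_intCast, map_natCast,
    Complex.conj_natCast, map_ofNat]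
  push_cast
  ring

lemma conj_dft_real (n : ℕ) [NeZero n] (Θ : ZMod n → ℝ) (k : ZMod n) :
    (starRingEnd ℂ) (ZMod.dft (fun g => (Θ g : ℂ)) k)
      = ZMod.dft (fun g => (Θ g : ℂ)) (-k) := by
  rw [ZMod.dft_apply, ZMod.dft_apply, map_sum]
  refine Finset.sum_congr rfl fun g _ => ?_
  rw [smul_eq_mul, smul_eq_mul, map_mul, Complex.conj_ofReal, conj_stdAddChar]
  congr 2
  ring

lemma dft_shift (n : ℕ) [NeZero n] (Θ : ZMod n → ℂ) (h k : ZMod n) :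
    ZMod.dft (fun g => Θ (g + h)) k = ZMod.stdAddChar (h * k) * ZMod.dft Θ k := by
  rw [ZMod.dft_apply, ZMod.dft_apply, Finset.mul_sum]
  refine Fintype.sum_equiv (Equiv.addRight h) _ _ (fun j => ?_)
  simp only [Equiv.coe_addRight, smul_eq_mul]
  rw [← mul_assoc, ← AddChar.map_add_eq_mul,
    show (h * k + -((j + h) * k) : ZMod n) = -(j * k) by ring]

/-- Inversion of the selective bispectrum on cyclic groups: the `n` bispectral
coefficients `β_{0,0}`, `β_{0,1}` and `β_{1,k}` (for `1 ≤ k ≤ n−2`) determine a real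
signal with nonvanishing Fourier transform up to cyclic translation. -/
theorem selective_bispectrum_inversion_cyclic (n : ℕ) [NeZero n] (hn : 2 ≤ n)
    (Θ Θ' : ZMod n → ℝ)
    (hF : ∀ k : ZMod n, cyclicDFT n (fun g => (Θ g : ℂ)) k ≠ 0)
    (h00 : cyclicBispectrum n (fun g => (Θ' g : ℂ)) 0 0
         = cyclicBispectrum n (fun g => (Θ g : ℂ)) 0 0)
    (h01 : cyclicBispectrum n (fun g => (Θ' g : ℂ)) 0 1
         = cyclicBispectrum n (fun g => (Θ g : ℂ)) 0 1)
    (h1k : ∀ k : ℕ, 1 ≤ k → k ≤ n - 2 →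
      cyclicBispectrum n (fun g => (Θ' g : ℂ)) 1 (k : ZMod n)
        = cyclicBispectrum n (fun g => (Θ g : ℂ)) 1 (k : ZMod n)) :
    ∃ h : ZMod n, ∀ g : ZMod n, Θ' g = Θ (g + h) := by
  classical
  set F : ZMod n → ℂ := ZMod.dft (fun g => (Θ g : ℂ)) with hFdef
  set G : ZMod n → ℂ := ZMod.dft (fun g => (Θ' g : ℂ)) with hGdef
  have hFne : ∀ k, F k ≠ 0 := fun k => by
    rw [hFdef, ← cyclicDFT_eq_dft]; exact hF k
  have hBF : ∀ j k, cyclicBispectrum n (fun g => (Θ g : ℂ)) j k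
      = F j * F k * (starRingEnd ℂ) (F (j + k)) := by
    intro j k
    simp only [cyclicBispectrum, cyclicDFT_eq_dft, hFdef]
  have hBG : ∀ j k, cyclicBispectrum n (fun g => (Θ' g : ℂ)) j k
      = G j * G k * (starRingEnd ℂ) (G (j + k)) := by
    intro j k
    simp only [cyclicBispectrum, cyclicDFT_eq_dft, hGdef]
  have hFc : ∀ k, (starRingEnd ℂ) (F k) = F (-k) := fun k => conj_dft_real n Θ k
  have hGc : ∀ k, (starRingEnd ℂ) (G k) = G (-k) := fun k => conj_dft_real n Θ' k
  -- Step 1 : G 0 = F 0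
  have hG0 : G 0 = F 0 := by
    have hF0c : (starRingEnd ℂ) (F 0) = F 0 := by rw [hFc 0, neg_zero]
    have hG0c : (starRingEnd ℂ) (G 0) = G 0 := by rw [hGc 0, neg_zero]
    have h3 : G 0 ^ 3 = F 0 ^ 3 := by
      have := h00
      rw [hBF, hBG, add_zero, hF0c, hG0c] at this
      linear_combination this
    obtain ⟨a, ha⟩ := Complex.conj_eq_iff_real.mp hF0c
    obtain ⟨b, hb⟩ := Complex.conj_eq_iff_real.mp hG0c
    rw [ha, hb] at h3 ⊢
    have h3' : b ^ 3 = a ^ 3 := by exact_mod_cast h3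
    exact_mod_cast (Odd.strictMono_pow (R := ℝ) ⟨1, by norm_num⟩).injective h3'
  -- Step 2 : |G 1| = |F 1|, define ζ
  set ζ : ℂ := G 1 / F 1 with hζdef
  have hζ1 : G 1 = F 1 * ζ := by
    rw [hζdef, mul_comm, div_mul_cancel₀ _ (hFne 1)]
  have hunit : ζ * (starRingEnd ℂ) ζ = 1 := by
    have h1 : G 1 * (starRingEnd ℂ) (G 1) = F 1 * (starRingEnd ℂ) (F 1) := by
      have := h01
      rw [hBF, hBG, hG0, zero_add] at this
      exact mul_left_cancel₀ (hFne 0) (by linear_combination this)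
    have hc1 : (starRingEnd ℂ) (F 1) ≠ 0 := by rw [hFc]; exact hFne (-1)
    refine mul_left_cancel₀ (mul_ne_zero (hFne 1) hc1) ?_
    rw [hζ1, map_mul] at h1
    rw [mul_one]
    linear_combination h1
  have hζne : ζ ≠ 0 := by
    intro h
    rw [h, zero_mul] at hunit
    exact one_ne_zero hunit.symm
  -- Step 3 : induction
  have key : ∀ m : ℕ, m ≤ n - 1 → G ((m : ℕ) : ZMod n) = F ((m : ℕ) : ZMod n) * ζ ^ m := by
    intro m
    induction m with
    | zero => intro _; simpa using hG0
    | succ k ih =>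
      intro hk1
      rcases Nat.eq_zero_or_pos k with hk0 | hkpos
      · subst hk0; simpa using hζ1
      · have hk2 : k ≤ n - 2 := by omega
        have hkle : k ≤ n - 1 := by omega
        have hGk := ih hkle
        have hbis := h1k k hkpos hk2
        rw [hBF, hBG] at hbis
        have hco : (1 + (k : ZMod n)) = (((k + 1 : ℕ)) : ZMod n) := by push_cast; ring
        rw [hco] at hbis
        rw [hGk, hζ1] at hbis
        -- hbis : F 1 * ζ * (F k * ζ ^ k) * conj (G (k+1)) = F 1 * F k * conj (F (k+1))
        have hFk : F ((k : ℕ) : ZMod n) ≠ 0 := hFne _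
        have hE : ζ ^ (k + 1) * (starRingEnd ℂ) (G (((k + 1 : ℕ)) : ZMod n))
            = (starRingEnd ℂ) (F (((k + 1 : ℕ)) : ZMod n)) := by
          have := mul_left_cancel₀ (mul_ne_zero (hFne 1) hFk)
            (show (F 1 * F ((k : ℕ) : ZMod n)) *
                (ζ ^ (k + 1) * (starRingEnd ℂ) (G (((k + 1 : ℕ)) : ZMod n)))
              = (F 1 * F ((k : ℕ) : ZMod n)) *
                ((starRingEnd ℂ) (F (((k + 1 : ℕ)) : ZMod n))) by
              linear_combination hbis)
          exact this
        -- conjugate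
        have hE2 := congrArg (starRingEnd ℂ) hE
        simp only [map_mul, map_pow, Complex.conj_conj] at hE2
        -- hE2 : (conj ζ) ^ (k+1) * G (k+1) = F (k+1)
        have hu : (ζ * (starRingEnd ℂ) ζ) ^ (k + 1) = 1 := by rw [hunit, one_pow]
        calc G (((k + 1 : ℕ)) : ZMod n)
            = (ζ * (starRingEnd ℂ) ζ) ^ (k + 1) * G (((k + 1 : ℕ)) : ZMod n) := by
              rw [hu, one_mul]
          _ = ζ ^ (k + 1) * ((starRingEnd ℂ) ζ ^ (k + 1) * G (((k + 1 : ℕ)) : ZMod n)) := by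
              ring
          _ = F (((k + 1 : ℕ)) : ZMod n) * ζ ^ (k + 1) := by rw [hE2]; ring
  -- Step 4 : ζ ^ n = 1
  have hζn : ζ ^ n = 1 := by
    have hm1 : (((n - 1 : ℕ)) : ZMod n) = (-1 : ZMod n) := by
      have : ((n : ℕ) : ZMod n) = 0 := ZMod.natCast_self n
      push_cast [Nat.cast_sub (by omega : 1 ≤ n)]
      rw [this, zero_sub]
    have h1 := key (n - 1) le_rfl
    rw [hm1] at h1
    have h2 : G (-1) = F (-1) * (starRingEnd ℂ) ζ := by
      rw [← hGc 1, hζ1, map_mul, hFc 1]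
    rw [h2] at h1
    have h3 : (starRingEnd ℂ) ζ = ζ ^ (n - 1) :=
      mul_left_cancel₀ (hFne (-1)) h1
    have : ζ ^ n = ζ ^ (n - 1) * ζ := by
      rw [← pow_succ]
      congr 1
      omega
    rw [this, ← h3, mul_comm]
    exact hunit
  -- Step 5 : ζ = stdAddChar h₀
  obtain ⟨h₀, hh₀lt, hh₀⟩ := (Complex.isPrimitiveRoot_exp n (NeZero.ne n)).eq_pow_of_pow_eq_one hζn
  have hζchar : ζ = ZMod.stdAddChar ((h₀ : ℕ) : ZMod n) := by
    rw [← hh₀, ZMod.stdAddChar_apply, ZMod.toCircle_natCast, ← Complex.exp_nat_mul]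
    congr 1
    ring
  refine ⟨((h₀ : ℕ) : ZMod n), ?_⟩
  -- Step 6 : conclude via injectivity of dft
  have hfun : G = ZMod.dft (fun g => ((Θ (g + ((h₀ : ℕ) : ZMod n)) : ℝ) : ℂ)) := by
    funext k
    rw [dft_shift n (fun g => ((Θ g : ℝ) : ℂ)) _ k, ← hFdef]
    have hkval : G k = F k * ζ ^ k.val := by
      have := key k.val (by have := ZMod.val_lt k; omega)
      rwa [ZMod.natCast_zmod_val] at this
    rw [hkval, hζchar, ← AddChar.map_nsmul_eq_pow]
    rw [show (k.val • (((h₀ : ℕ) : ZMod n)) : ZMod n) = ((h₀ : ℕ) : ZMod n) * k by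
      rw [nsmul_eq_mul, ZMod.natCast_zmod_val]; ring]
    ring
  have hinj := ZMod.dft.injective (hGdef.symm.trans hfun)
  intro g
  have := congrFun hinj g
  exact_mod_cast this
end

section
/- Let n ≥ 2 and let Θ, Θ̃ : ZMod n → ℝ be real signals such that F(Θ)_k ≠ 0 for every k ∈ ZMod n. If β(Θ̃)_{0,0} = β(Θ)_{0,0}, β(Θ̃)_{0,1} = β(Θ)_{0,1}, and β(Θ̃)_{1,k} = β(Θ)_{1,k} for every k ∈ ZMod n that is the image of an integer between 1 and n−2, then there exists z ∈ ℂ with |z| = 1 such that F(Θ̃)_k = z^k̄ · F(Θ)_k for every k ∈ ZMod n, where k̄ ∈ {0,…,n−1} is the integer representative of k. (Correctness of the recursive recovery step of the selective-bispectrum inversion algorithm: the Fourier transform is recovered up to a single phase factor.) -/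
/-!
For a real signal, `F(Θ)_0 = Σ Θ` is real, so `β_{0,0} = F_0³` pins down `F(Θ')_0 = F(Θ)_0`.
Then `β_{0,1} = F_0 |F_1|²` gives `|F(Θ')_1| = |F(Θ)_1|`, so `z := F(Θ')_1 / F(Θ)_1` is a phase.
Finally `β_{1,k} = F_1 F_k conj(F_{k+1})` determines `F_{k+1}` from `F_1` and `F_k`, and by induction
on `k` the factor `z` propagates as `F(Θ')_k = z^k F(Θ)_k`.
-/

open Finset

open ComplexConjugate

lemma eq_mul_of_mul_mul_conj_eq {z a w c : ℂ} (hz : ‖z‖ = 1) (ha : a ≠ 0)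
    (h : a * z * conj w = a * conj c) : w = z * c := by
  have hzw : z * conj w = conj c := mul_left_cancel₀ ha (by rw [← mul_assoc, h])
  have hz_conj : z * conj z = 1 := by rw [Complex.mul_conj', hz]; norm_num
  calc w = z * conj z * w := by rw [hz_conj, one_mul]
    _ = z * conj (z * conj w) := by simp only [map_mul, Complex.conj_conj]; ring
    _ = z * c := by rw [hzw, Complex.conj_conj]

section Bispectrum

variable {n : ℕ} [NeZero n]

lemma cyclicDFT_zero_ofReal (Θ : ZMod n → ℝ) :
    cyclicDFT n (fun g => (Θ g : ℂ)) 0 = ((∑ g, Θ g : ℝ) : ℂ) := by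
  simp [cyclicDFT, ZMod.val_zero]

lemma cyclicDFT_zero_eq_of_cyclicBispectrum_zero_zero_eq (Θ Θ' : ZMod n → ℝ)
    (h00 : cyclicBispectrum n (fun g => (Θ' g : ℂ)) 0 0
      = cyclicBispectrum n (fun g => (Θ g : ℂ)) 0 0) :
    cyclicDFT n (fun g => (Θ' g : ℂ)) 0 = cyclicDFT n (fun g => (Θ g : ℂ)) 0 := by
  simp only [cyclicBispectrum, add_zero, cyclicDFT_zero_ofReal, Complex.conj_ofReal] at h00 ⊢
  have hcube : ((∑ g, Θ' g) ^ 3 : ℝ) = (∑ g, Θ g) ^ 3 := by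
    exact_mod_cast (by linear_combination h00 :
      ((∑ g, Θ' g : ℝ) : ℂ) ^ 3 = ((∑ g, Θ g : ℝ) : ℂ) ^ 3)
  rw [(Odd.pow_inj (by decide : Odd 3)).mp hcube]

lemma norm_cyclicDFT_eq_of_cyclicBispectrum_zero_eq (Θ Θ' : ZMod n → ℂ) (j : ZMod n)
    (h0 : cyclicDFT n Θ' 0 = cyclicDFT n Θ 0) (hF0 : cyclicDFT n Θ 0 ≠ 0)
    (h0j : cyclicBispectrum n Θ' 0 j = cyclicBispectrum n Θ 0 j) :
    ‖cyclicDFT n Θ' j‖ = ‖cyclicDFT n Θ j‖ := by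
  simp only [cyclicBispectrum, zero_add, h0, mul_assoc, Complex.mul_conj'] at h0j
  have hsq := mul_left_cancel₀ hF0 h0j
  exact (pow_left_inj₀ (norm_nonneg _) (norm_nonneg _) two_ne_zero).mp (by exact_mod_cast hsq)

lemma cyclicDFT_one_add_eq_of_cyclicBispectrum_one_eq (Θ Θ' : ZMod n → ℂ) {z : ℂ}
    (hz : ‖z‖ = 1) (k : ZMod n) (m : ℕ)
    (hF1 : cyclicDFT n Θ 1 ≠ 0) (hFk : cyclicDFT n Θ k ≠ 0)
    (h1 : cyclicDFT n Θ' 1 = z * cyclicDFT n Θ 1)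
    (hk : cyclicDFT n Θ' k = z ^ m * cyclicDFT n Θ k)
    (h1k : cyclicBispectrum n Θ' 1 k = cyclicBispectrum n Θ 1 k) :
    cyclicDFT n Θ' (1 + k) = z ^ (m + 1) * cyclicDFT n Θ (1 + k) := by
  refine eq_mul_of_mul_mul_conj_eq (by rw [norm_pow, hz, one_pow]) (mul_ne_zero hF1 hFk) ?_
  simp only [cyclicBispectrum, h1, hk] at h1k
  linear_combination h1k

lemma cyclicDFT_natCast_eq_pow_mul (Θ Θ' : ZMod n → ℂ) {z : ℂ} (hz : ‖z‖ = 1)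
    (hF : ∀ k, cyclicDFT n Θ k ≠ 0)
    (h0 : cyclicDFT n Θ' 0 = cyclicDFT n Θ 0)
    (h1 : cyclicDFT n Θ' 1 = z * cyclicDFT n Θ 1)
    (h1k : ∀ k : ℕ, 1 ≤ k → k ≤ n - 2 →
      cyclicBispectrum n Θ' 1 (k : ZMod n) = cyclicBispectrum n Θ 1 (k : ZMod n)) :
    ∀ m : ℕ, m < n → cyclicDFT n Θ' m = z ^ m * cyclicDFT n Θ m
  | 0, _ => by simpa using h0
  | 1, _ => by simpa using h1
  | m + 2, hm => by
    have ih := cyclicDFT_natCast_eq_pow_mul Θ Θ' hz hF h0 h1 h1k (m + 1) (by omega)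
    have step := cyclicDFT_one_add_eq_of_cyclicBispectrum_one_eq Θ Θ' hz _ _ (hF 1) (hF _)
      h1 ih (h1k (m + 1) (by omega) (by omega))
    rwa [add_comm (1 : ZMod n), ← Nat.cast_add_one] at step

end Bispectrum

theorem selective_bispectrum_recovery_up_to_phase_general (n : ℕ) [NeZero n]
    (Θ Θ' : ZMod n → ℝ)
    (hF : ∀ k : ZMod n, cyclicDFT n (fun g => (Θ g : ℂ)) k ≠ 0)
    (h00 : cyclicBispectrum n (fun g => (Θ' g : ℂ)) 0 0
         = cyclicBispectrum n (fun g => (Θ g : ℂ)) 0 0)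
    (h01 : cyclicBispectrum n (fun g => (Θ' g : ℂ)) 0 1
         = cyclicBispectrum n (fun g => (Θ g : ℂ)) 0 1)
    (h1k : ∀ k : ℕ, 1 ≤ k → k ≤ n - 2 →
      cyclicBispectrum n (fun g => (Θ' g : ℂ)) 1 (k : ZMod n)
        = cyclicBispectrum n (fun g => (Θ g : ℂ)) 1 (k : ZMod n)) :
    ∃ z : ℂ, ‖z‖ = 1 ∧
      ∀ k : ZMod n,
        cyclicDFT n (fun g => (Θ' g : ℂ)) k
          = z ^ k.val * cyclicDFT n (fun g => (Θ g : ℂ)) k := by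
  set F := cyclicDFT n (fun g => (Θ g : ℂ))
  set G := cyclicDFT n (fun g => (Θ' g : ℂ))
  have h0 : G 0 = F 0 := cyclicDFT_zero_eq_of_cyclicBispectrum_zero_zero_eq Θ Θ' h00
  have hnorm : ‖G 1‖ = ‖F 1‖ := norm_cyclicDFT_eq_of_cyclicBispectrum_zero_eq _ _ 1 h0 (hF 0) h01
  have hz : ‖G 1 / F 1‖ = 1 := by rw [norm_div, hnorm, div_self (norm_ne_zero_iff.mpr (hF 1))]
  have h1 : G 1 = G 1 / F 1 * F 1 := (div_mul_cancel₀ _ (hF 1)).symm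
  refine ⟨G 1 / F 1, hz, fun k => ?_⟩
  simpa using cyclicDFT_natCast_eq_pow_mul _ _ hz hF h0 h1 h1k k.val k.val_lt

/-- Correctness of the recursive recovery step of the selective-bispectrum inversion
algorithm on cyclic groups: equality of the selected `n` bispectral coefficients
forces the Fourier transform of `Θ'` to equal that of `Θ` up to a single phase
factor, `F(Θ')_k = z^k̄ · F(Θ)_k` with `|z| = 1`. -/
theorem selective_bispectrum_recovery_up_to_phase (n : ℕ) [NeZero n] (hn : 2 ≤ n)
    (Θ Θ' : ZMod n → ℝ)
    (hF : ∀ k : ZMod n, cyclicDFT n (fun g => (Θ g : ℂ)) k ≠ 0)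
    (h00 : cyclicBispectrum n (fun g => (Θ' g : ℂ)) 0 0
         = cyclicBispectrum n (fun g => (Θ g : ℂ)) 0 0)
    (h01 : cyclicBispectrum n (fun g => (Θ' g : ℂ)) 0 1
         = cyclicBispectrum n (fun g => (Θ g : ℂ)) 0 1)
    (h1k : ∀ k : ℕ, 1 ≤ k → k ≤ n - 2 →
      cyclicBispectrum n (fun g => (Θ' g : ℂ)) 1 (k : ZMod n)
        = cyclicBispectrum n (fun g => (Θ g : ℂ)) 1 (k : ZMod n)) :
    ∃ z : ℂ, ‖z‖ = 1 ∧
      ∀ k : ZMod n,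
        cyclicDFT n (fun g => (Θ' g : ℂ)) k
          = z ^ k.val * cyclicDFT n (fun g => (Θ g : ℂ)) k :=
  selective_bispectrum_recovery_up_to_phase_general n Θ Θ' hF h00 h01 h1k
end

section
/- Let n ≥ 2 and let Θ, Θ̃ : ZMod n → ℝ be real signals such that F(Θ)_k ≠ 0 for every k ∈ ZMod n. Suppose z ∈ ℂ satisfies |z| = 1 and F(Θ̃)_k = z^k̄ · F(Θ)_k for every k ∈ ZMod n, where k̄ ∈ {0,…,n−1} is the integer representative of k. Then z^n = 1, and writing z = exp(2πi·h/n) with h ∈ {0,…,n−1}, one has Θ̃(g) = Θ(g + h) for all g ∈ ZMod n. (The realness of the signals forces the residual phase ambiguity of the bispectrum inversion to be a genuine cyclic translation.) -/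
/-!
Translation by `h` multiplies the `k`-th Fourier coefficient by `exp (2πi·h·k̄/n)`, so once `z`
is this root of unity, `Θ'` and the translate of `Θ` have the same Fourier transform and
coincide by Fourier inversion. That `z` is an `n`-th root of unity at all comes from the
symmetry `F(Θ)_{-k} = conj F(Θ)_k` of real signals.
-/

open Finset

namespace ZMod

open scoped ComplexConjugate

variable {N : ℕ} [NeZero N]

lemma stdAddChar_natCast (h : ℕ) :
    stdAddChar (h : ZMod N) = Complex.exp (2 * Real.pi * Complex.I * h / N) := by
  simpa using stdAddChar_coe (N := N) h

lemma stdAddChar_mul_eq_pow_val (h k : ZMod N) : stdAddChar (h * k) = stdAddChar h ^ k.val := by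
  rw [← AddChar.map_nsmul_eq_pow, nsmul_eq_mul, natCast_zmod_val, mul_comm]

lemma dft_eq_cyclicDFT (Φ : ZMod N → ℂ) : 𝓕 Φ = cyclicDFT N Φ := by
  ext k
  refine sum_congr rfl fun j _ ↦ ?_
  have hjk : j * k = ((k.val * j.val : ℕ) : ZMod N) := by simp [mul_comm]
  rw [smul_eq_mul, mul_comm, AddChar.map_neg_eq_inv, hjk, stdAddChar_natCast, neg_div,
    Complex.exp_neg]
  push_cast
  ring_nf

lemma dft_comp_add_right {E : Type*} [AddCommGroup E] [Module ℂ E] (Φ : ZMod N → E)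
    (t k : ZMod N) : 𝓕 (fun j ↦ Φ (j + t)) k = stdAddChar (t * k) • 𝓕 Φ k := by
  rw [dft_apply, dft_apply, smul_sum]
  refine Fintype.sum_equiv (Equiv.addRight t) _ _ fun j ↦ ?_
  rw [Equiv.coe_addRight, smul_smul, ← AddChar.map_add_eq_mul]
  congr 2
  ring

lemma dft_ofReal_neg (Φ : ZMod N → ℝ) (k : ZMod N) :
    𝓕 (fun j ↦ (Φ j : ℂ)) (-k) = conj (𝓕 (fun j ↦ (Φ j : ℂ)) k) := by
  simp only [dft_apply, map_sum, smul_eq_mul, map_mul, Complex.conj_ofReal,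
    ← AddChar.map_neg_eq_conj, mul_neg, neg_neg]

/-- Realness of `Φ` and `Φ'` forces the phase `z ^ (N - 1)` at frequency `-1` to be the
conjugate of the phase `z` at frequency `1`, and `conj z * z = ‖z‖ ^ 2 = 1`. -/
lemma pow_eq_one_of_dft_ofReal_eq_pow_val_mul (hN : 2 ≤ N) {Φ Φ' : ZMod N → ℝ}
    (hΦ : 𝓕 (fun j ↦ (Φ j : ℂ)) 1 ≠ 0) {z : ℂ} (hz : ‖z‖ = 1)
    (h : ∀ k, 𝓕 (fun j ↦ (Φ' j : ℂ)) k = z ^ k.val * 𝓕 (fun j ↦ (Φ j : ℂ)) k) :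
    z ^ N = 1 := by
  have : Fact (1 < N) := ⟨hN⟩
  have hval : (-1 : ZMod N).val = N - 1 := by
    rw [neg_val, if_neg one_ne_zero, val_one]
  have hΦneg : 𝓕 (fun j ↦ (Φ j : ℂ)) (-1) ≠ 0 := by
    rwa [dft_ofReal_neg, map_ne_zero]
  have hphase : z ^ (N - 1) = conj z := by
    refine mul_right_cancel₀ hΦneg ?_
    rw [← hval, ← h, dft_ofReal_neg, h, val_one, pow_one, map_mul, ← dft_ofReal_neg]
  calc z ^ N = z ^ (N - 1) * z := by rw [← pow_succ, Nat.sub_add_cancel (by omega)]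
    _ = 1 := by rw [hphase, Complex.conj_mul', hz]; norm_num

end ZMod

open ZMod in
/-- The realness of the signals forces the residual phase ambiguity of the bispectrum
inversion to be a genuine cyclic translation: if `F(Θ')_k = z^k̄ · F(Θ)_k` with
`|z| = 1`, then `z` is an `n`-th root of unity, and writing `z = exp(2πi·h/n)` with
`0 ≤ h < n`, the signal `Θ'` is the translate of `Θ` by `h`. -/
theorem bispectrum_phase_is_translation (n : ℕ) [NeZero n] (hn : 2 ≤ n)
    (Θ Θ' : ZMod n → ℝ)
    (hF : ∀ k : ZMod n, cyclicDFT n (fun g => (Θ g : ℂ)) k ≠ 0)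
    (z : ℂ) (hz : ‖z‖ = 1)
    (hzk : ∀ k : ZMod n,
      cyclicDFT n (fun g => (Θ' g : ℂ)) k
        = z ^ k.val * cyclicDFT n (fun g => (Θ g : ℂ)) k) :
    z ^ n = 1 ∧
      ∀ h : ℕ, h < n → z = Complex.exp (2 * (Real.pi : ℂ) * Complex.I * h / n) →
        ∀ g : ZMod n, Θ' g = Θ (g + (h : ZMod n)) := by
  simp only [← dft_eq_cyclicDFT] at hF hzk
  refine ⟨pow_eq_one_of_dft_ofReal_eq_pow_val_mul hn (hF 1) hz hzk, fun h _ hzh g ↦ ?_⟩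
  rw [← stdAddChar_natCast] at hzh
  have hdft : 𝓕 (fun g ↦ (Θ' g : ℂ)) = 𝓕 (fun g ↦ (Θ (g + (h : ZMod n)) : ℂ)) := by
    ext k
    rw [hzk, dft_comp_add_right (fun g ↦ (Θ g : ℂ)), hzh, stdAddChar_mul_eq_pow_val, smul_eq_mul]
  exact_mod_cast congrFun (dft.injective hdft) g
end

section
/- Let G be a finite (additive) abelian group and let Θ, Θ̃ : G → ℂ be signals with F(Θ)_χ ≠ 0 for every character χ : AddChar G ℂ. Then β(Θ̃)_{χ₁,χ₂} = β(Θ)_{χ₁,χ₂} for all pairs of characters χ₁, χ₂ if and only if there exists h ∈ G such that Θ̃(g) = Θ(g + h) for all g ∈ G. (Completeness of the full bispectrum on finite abelian groups: it is invariant under translation and separates signals up to translation.) -/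
/-!
Translating `Θ` by `h` multiplies `F(Θ)_χ` by `χ(h)`, which has modulus one, so the bispectrum is
translation invariant. Conversely, if the bispectra agree and `F(Θ)` has no zeros, the ratio
`r = F(Θ')/F(Θ)` satisfies `r(χ₁) r(χ₂) conj(r(χ₁χ₂)) = 1`. Taking `χ₁ = χ₂ = 1` and then `χ₂ = 1`
shows `r(1) = 1` and `|r| = 1`, so `r` is a character of the dual group; by Pontryagin duality it is
evaluation at some `h ∈ G`. Then `F(Θ') = F(Θ(· + h))`, and Fourier inversion gives
`Θ' = Θ(· + h)`.
-/

open Finset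

/-- The Fourier transform of a signal `Θ : G → ℂ` on a finite additive abelian group,
evaluated at an additive character `χ`: `F(Θ)_χ = Σ_g Θ(g) · conj(χ(g))`. -/
noncomputable def addCharDFT {G : Type*} [AddCommGroup G] [Fintype G]
    (Θ : G → ℂ) (χ : AddChar G ℂ) : ℂ :=
  ∑ g : G, Θ g * (starRingEnd ℂ) (χ g)

/-- The bispectrum of a signal `Θ : G → ℂ` on a finite additive abelian group:
`β(Θ)_{χ₁,χ₂} = F(Θ)_{χ₁} · F(Θ)_{χ₂} · conj(F(Θ)_{χ₁·χ₂})`. -/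
noncomputable def addCharBispectrum {G : Type*} [AddCommGroup G] [Fintype G]
    (Θ : G → ℂ) (χ₁ χ₂ : AddChar G ℂ) : ℂ :=
  addCharDFT Θ χ₁ * addCharDFT Θ χ₂ * (starRingEnd ℂ) (addCharDFT Θ (χ₁ * χ₂))

open scoped ComplexConjugate

lemma Complex.eq_one_of_mul_self_mul_conj_eq_one {z : ℂ} (hz : z * z * conj z = 1) : z = 1 := by
  have hnorm : ‖z‖ ^ 3 = 1 := by simpa [pow_succ] using congrArg (‖·‖) hz
  have hnorm' : ‖z‖ = 1 := (pow_eq_one_iff_of_nonneg (norm_nonneg z) (by norm_num)).1 hnorm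
  rwa [mul_assoc, Complex.mul_conj', hnorm', Complex.ofReal_one, one_pow, mul_one] at hz

section TripleProduct

variable {M : Type*} [MulOneClass M] {r : M → ℂ}

lemma map_one_of_mul_mul_conj_map_mul_eq_one (hr : ∀ a b, r a * r b * conj (r (a * b)) = 1) :
    r 1 = 1 :=
  Complex.eq_one_of_mul_self_mul_conj_eq_one (by simpa using hr 1 1)

lemma map_mul_of_mul_mul_conj_map_mul_eq_one (hr : ∀ a b, r a * r b * conj (r (a * b)) = 1)
    (a b : M) : r (a * b) = r a * r b := by
  have hunit : ∀ c, r c * conj (r c) = 1 := fun c ↦ by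
    simpa [map_one_of_mul_mul_conj_map_mul_eq_one hr, mul_right_comm] using hr c 1
  calc r (a * b) = r a * r b * conj (r (a * b)) * r (a * b) := by rw [hr, one_mul]
    _ = r a * r b := by rw [mul_assoc, mul_comm (conj _), hunit, mul_one]

end TripleProduct

section Fourier

variable {G : Type*} [AddCommGroup G] [Fintype G]

lemma AddChar.apply_mul_conj_apply (χ : AddChar G ℂ) (h : G) : χ h * conj (χ h) = 1 := by
  rw [Complex.mul_conj', χ.norm_apply]; simp

lemma addCharDFT_comp_add_right (Θ : G → ℂ) (h : G) (χ : AddChar G ℂ) :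
    addCharDFT (fun g ↦ Θ (g + h)) χ = χ h * addCharDFT Θ χ := by
  unfold addCharDFT
  rw [mul_sum, ← (Equiv.subRight h).sum_comp]
  refine sum_congr rfl fun g _ ↦ ?_
  simp only [Equiv.subRight_apply, sub_add_cancel]
  rw [sub_eq_add_neg, AddChar.map_add_eq_mul, map_mul, ← χ.map_neg_eq_conj (-h), neg_neg]
  ring

lemma addCharBispectrum_comp_add_right (Θ : G → ℂ) (h : G) (χ₁ χ₂ : AddChar G ℂ) :
    addCharBispectrum (fun g ↦ Θ (g + h)) χ₁ χ₂ = addCharBispectrum Θ χ₁ χ₂ :=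
  calc addCharBispectrum (fun g ↦ Θ (g + h)) χ₁ χ₂
      = χ₁ h * conj (χ₁ h) * (χ₂ h * conj (χ₂ h)) * addCharBispectrum Θ χ₁ χ₂ := by
        simp only [addCharBispectrum, addCharDFT_comp_add_right, AddChar.mul_apply, map_mul]
        ring
    _ = addCharBispectrum Θ χ₁ χ₂ := by simp only [AddChar.apply_mul_conj_apply, one_mul]

lemma sum_addCharDFT_mul_apply (Θ : G → ℂ) (g : G) :
    ∑ χ : AddChar G ℂ, addCharDFT Θ χ * χ g = Fintype.card G * Θ g := by
  classical
  calc ∑ χ : AddChar G ℂ, addCharDFT Θ χ * χ g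
      = ∑ x, Θ x * ∑ χ : AddChar G ℂ, χ (g - x) := by
        simp only [addCharDFT, sum_mul, mul_sum]
        rw [sum_comm]
        refine sum_congr rfl fun x _ ↦ sum_congr rfl fun χ _ ↦ ?_
        rw [AddChar.map_sub_eq_div, ← AddChar.inv_apply_eq_conj]
        ring
    _ = ∑ x, Θ x * if g - x = 0 then (Fintype.card G : ℂ) else 0 := by
        simp_rw [AddChar.sum_apply_eq_ite]
    _ = Fintype.card G * Θ g := by simp [sub_eq_zero, mul_comm]

lemma addCharDFT_injective : Function.Injective (addCharDFT : (G → ℂ) → AddChar G ℂ → ℂ) := by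
  intro A B hAB
  funext g
  refine mul_left_cancel₀ (Nat.cast_ne_zero.2 Fintype.card_ne_zero : (Fintype.card G : ℂ) ≠ 0) ?_
  rw [← sum_addCharDFT_mul_apply, ← sum_addCharDFT_mul_apply, hAB]

lemma AddChar.exists_apply_eq_of_mul_mul_conj_map_mul_eq_one {r : AddChar G ℂ → ℂ}
    (hr : ∀ χ₁ χ₂, r χ₁ * r χ₂ * conj (r (χ₁ * χ₂)) = 1) : ∃ h : G, ∀ χ, χ h = r χ := by
  let ρ : AddChar (AddChar G ℂ) ℂ :=
    { toFun := r
      map_zero_eq_one' := map_one_of_mul_mul_conj_map_mul_eq_one hr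
      map_add_eq_mul' := map_mul_of_mul_mul_conj_map_mul_eq_one hr }
  obtain ⟨h, hh⟩ := AddChar.doubleDualEmb_bijective.surjective ρ
  exact ⟨h, fun χ ↦ DFunLike.congr_fun hh χ⟩

lemma div_addCharDFT_mul_mul_conj_map_mul_eq_one {Θ Θ' : G → ℂ}
    (hF : ∀ χ, addCharDFT Θ χ ≠ 0)
    (hβ : ∀ χ₁ χ₂, addCharBispectrum Θ' χ₁ χ₂ = addCharBispectrum Θ χ₁ χ₂) (χ₁ χ₂ : AddChar G ℂ) :
    addCharDFT Θ' χ₁ / addCharDFT Θ χ₁ * (addCharDFT Θ' χ₂ / addCharDFT Θ χ₂) *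
      conj (addCharDFT Θ' (χ₁ * χ₂) / addCharDFT Θ (χ₁ * χ₂)) = 1 := by
  rw [map_div₀, div_mul_div_comm, div_mul_div_comm, div_eq_one_iff_eq]
  · exact hβ χ₁ χ₂
  · exact mul_ne_zero (mul_ne_zero (hF χ₁) (hF χ₂)) ((map_ne_zero _).2 (hF _))

end Fourier

/-- Completeness of the full bispectrum on finite abelian groups: for signals whose
Fourier transform never vanishes, the bispectra agree at all pairs of characters if
and only if the signals agree up to translation. -/
theorem bispectrum_complete_abelian {G : Type*} [AddCommGroup G] [Fintype G]
    (Θ Θ' : G → ℂ) (hF : ∀ χ : AddChar G ℂ, addCharDFT Θ χ ≠ 0) :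
    (∀ χ₁ χ₂ : AddChar G ℂ, addCharBispectrum Θ' χ₁ χ₂ = addCharBispectrum Θ χ₁ χ₂)
      ↔ ∃ h : G, ∀ g : G, Θ' g = Θ (g + h) := by
  refine ⟨fun hβ ↦ ?_, fun ⟨h, hh⟩ χ₁ χ₂ ↦ ?_⟩
  · obtain ⟨h, hh⟩ := AddChar.exists_apply_eq_of_mul_mul_conj_map_mul_eq_one
      (div_addCharDFT_mul_mul_conj_map_mul_eq_one hF hβ)
    refine ⟨h, congrFun (addCharDFT_injective (funext fun χ ↦ ?_))⟩
    rw [addCharDFT_comp_add_right, hh, div_mul_cancel₀ _ (hF χ)]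
  · rw [show Θ' = fun g ↦ Θ (g + h) from funext hh, addCharBispectrum_comp_add_right]
end
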